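/- arXiv:2201.04232 — 4 statements merged into one kernel-verified Lean document; each statement's English description precedes it below -/
import Mathlib

section
/- Let μ and ν be probability measures on ℝ with finite second moment, μ atomless. Then the map T = Q_ν ∘ F_μ (the monotone rearrangement), where F_μ is the CDF of μ and Q_ν the quantile function of ν, pushes μ forward to ν and is an optimal transport map for the quadratic cost, i.e. W_2(μ,ν)² = ∫ (T(x) - x)² dμ(x). -/
/-!
`F_μ` pushes the atomless measure `μ` forward to the uniform measure on `(0, 1)`, and `Q_ν` pushes
that uniform measure forward to `ν`; hence `T = Q_ν ∘ F_μ` transports `μ` to `ν`.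

For a coupling `γ` of `μ` and `ν` the cost is `∫ x² dμ + ∫ y² dν - 2 ∫ xy dγ`, so it suffices that
the graph coupling of `T` maximises `∫ xy dγ`. Hoeffding's identity
`xy = ∫∫ layer x s * layer y t ds dt`, where `layer x s = 𝟙{s < x} - 𝟙{s < 0}`, writes `∫ xy dγ`
as the integral over `(s, t)` of `γ ((s, ∞) × (t, ∞))` plus terms that depend only on the
marginals. Since `T` is monotone off a `μ`-null set, the sets `{x > s}` and `{T x > t}` are nested
up to a null set, so the graph coupling gives every such orthant the largest mass
`min (μ (s, ∞)) (ν (t, ∞))` that a coupling can.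
-/

open MeasureTheory ProbabilityTheory Filter

/-- Squared 2-Wasserstein distance, defined as the infimum of the quadratic
transport cost over all couplings. -/
noncomputable def W2sq {E : Type*} [NormedAddCommGroup E] [MeasurableSpace E]
    (μ ν : Measure E) : ℝ :=
  sInf ((fun γ : Measure (E × E) => ∫ p, ‖p.1 - p.2‖ ^ 2 ∂γ) ''
    {γ | γ.map Prod.fst = μ ∧ γ.map Prod.snd = ν})

/-- Quantile (right-continuous inverse of the CDF) of a measure on ℝ. -/
noncomputable def quantile (μ : Measure ℝ) (t : ℝ) : ℝ :=
  sInf {x | t ≤ ProbabilityTheory.cdf μ x}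

open Set Topology

section Quantile

variable {ν : Measure ℝ}

theorem quantile_le_iff {t a : ℝ} (ht0 : 0 < t) (ht1 : t < 1) :
    quantile ν t ≤ a ↔ t ≤ cdf ν a := by
  obtain ⟨b, hb⟩ : ∃ b, cdf ν b < t := ((tendsto_cdf_atBot ν).eventually_lt_const ht0).exists
  obtain ⟨c, hc⟩ : ∃ c, t ≤ cdf ν c := ((tendsto_cdf_atTop ν).eventually_const_le ht1).exists
  have hbdd : BddBelow {x | t ≤ cdf ν x} := ⟨b, fun x hx => le_of_not_gt fun hxb =>
    (hb.trans_le (hx.trans (monotone_cdf ν hxb.le))).false⟩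
  refine ⟨fun h => ?_, fun h => csInf_le hbdd h⟩
  have hgt : ∀ x, quantile ν t < x → t ≤ cdf ν x := fun x hx => by
    obtain ⟨y, hy, hyx⟩ := exists_lt_of_csInf_lt ⟨c, hc⟩ hx
    exact hy.trans (monotone_cdf ν hyx.le)
  exact ge_of_tendsto (((cdf ν).right_continuous a).mono Ioi_subset_Ici_self)
    (eventually_nhdsWithin_of_forall fun x hx => hgt x (h.trans_lt hx))

theorem quantile_monotoneOn : MonotoneOn (quantile ν) (Ioo 0 1) := fun _ ht _ ht' htt' =>
  (quantile_le_iff ht.1 ht.2).2 (htt'.trans ((quantile_le_iff ht'.1 ht'.2).1 le_rfl))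

theorem aemeasurable_quantile : AEMeasurable (quantile ν) (volume.restrict (Ioo 0 1)) :=
  aemeasurable_restrict_of_monotoneOn measurableSet_Ioo quantile_monotoneOn

theorem map_quantile [IsProbabilityMeasure ν] :
    (volume.restrict (Ioo 0 1)).map (quantile ν) = ν := by
  refine Measure.ext_of_Iic _ _ fun a => ?_
  rw [Measure.map_apply_of_aemeasurable aemeasurable_quantile measurableSet_Iic,
    Measure.restrict_apply' measurableSet_Ioo, ← ofReal_cdf]
  have hmem : ∀ t, t ∈ quantile ν ⁻¹' Iic a ∩ Ioo 0 1 ↔ 0 < t ∧ t < 1 ∧ t ≤ cdf ν a :=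
    fun t => ⟨fun ⟨h, h0, h1⟩ => ⟨h0, h1, (quantile_le_iff h0 h1).1 h⟩,
      fun ⟨h0, h1, h⟩ => ⟨(quantile_le_iff h0 h1).2 h, h0, h1⟩⟩
  refine le_antisymm ?_ ?_
  · calc _ ≤ volume (Ioc 0 (cdf ν a)) := measure_mono fun t ht => by
          obtain ⟨h0, -, h⟩ := (hmem t).1 ht
          exact ⟨h0, h⟩
      _ = _ := by rw [Real.volume_Ioc, sub_zero]
  · calc _ = volume (Ioo 0 (cdf ν a)) := by rw [Real.volume_Ioo, sub_zero]
      _ ≤ _ := measure_mono fun t ht =>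
          (hmem t).2 ⟨ht.1, ht.2.trans_le (cdf_le_one ν a), ht.2.le⟩

end Quantile

section Atomless

variable (μ : Measure ℝ) [IsProbabilityMeasure μ] [NullSingletonClass μ]

theorem continuous_cdf : Continuous (cdf μ) := by
  refine continuous_iff_continuousAt.2 fun a =>
    (monotone_cdf μ).continuousAt_iff_leftLim_eq_rightLim.2 ?_
  have h := (cdf μ).measure_singleton a
  rw [measure_cdf, measure_singleton, eq_comm, ENNReal.ofReal_eq_zero, sub_nonpos] at h
  rw [StieltjesFunction.rightLim_eq]
  exact le_antisymm ((monotone_cdf μ).leftLim_le le_rfl) h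

theorem measure_cdf_le {c : ℝ} (hc0 : 0 ≤ c) (hc1 : c < 1) :
    μ {x | cdf μ x ≤ c} = ENNReal.ofReal c := by
  set S := {x | cdf μ x ≤ c}
  rcases S.eq_empty_or_nonempty with hS | hS
  · have hc : c ≤ 0 := ge_of_tendsto' (tendsto_cdf_atBot μ) fun x =>
      (not_le.1 fun hx => (hS ▸ hx : x ∈ (∅ : Set ℝ))).le
    rw [hS, measure_empty, le_antisymm hc hc0, ENNReal.ofReal_zero]
  obtain ⟨u, hu⟩ : ∃ u, c < cdf μ u := ((tendsto_cdf_atTop μ).eventually_const_lt hc1).exists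
  have hbdd : BddAbove S := ⟨u, fun x hx => le_of_not_gt fun hux =>
    (hu.trans_le ((monotone_cdf μ) hux.le)).not_ge hx⟩
  have hm : sSup S ∈ S := (isClosed_le (continuous_cdf μ) continuous_const).csSup_mem hS hbdd
  have hSm : S = Iic (sSup S) :=
    (subset_antisymm (fun x hx => le_csSup hbdd hx) fun x hx => (monotone_cdf μ hx).trans hm)
  have hcm : c ≤ cdf μ (sSup S) :=
    ge_of_tendsto ((continuous_cdf μ).continuousAt.tendsto.mono_left nhdsWithin_le_nhds)
      (eventually_nhdsWithin_of_forall (s := Ioi (sSup S)) fun x hx =>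
        le_of_not_ge fun hxc => hx.not_ge (le_csSup hbdd hxc))
  rw [hSm, ← ofReal_cdf, le_antisymm hm hcm]

theorem map_cdf : μ.map (cdf μ) = volume.restrict (Ioo 0 1) := by
  refine Measure.ext_of_Iic _ _ fun c => ?_
  rw [Measure.map_apply (monotone_cdf μ).measurable measurableSet_Iic,
    Measure.restrict_apply measurableSet_Iic]
  rcases lt_or_ge c 0 with hc0 | hc0
  · have hF : cdf μ ⁻¹' Iic c = ∅ :=
      eq_empty_of_forall_notMem fun x (hx : cdf μ x ≤ c) => by linarith [cdf_nonneg μ x]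
    have hI : Iic c ∩ Ioo 0 1 = ∅ :=
      eq_empty_of_forall_notMem fun t ⟨(ht : t ≤ c), ht0, _⟩ => by linarith
    rw [hF, hI, measure_empty, measure_empty]
  rcases lt_or_ge c 1 with hc1 | hc1
  · have hI : Iic c ∩ Ioo 0 1 = Ioc 0 c := Subset.antisymm (fun t ⟨htc, ht0, _⟩ => ⟨ht0, htc⟩)
      fun t ⟨ht0, htc⟩ => ⟨htc, ht0, htc.trans_lt hc1⟩
    rw [hI, Real.volume_Ioc, sub_zero]
    exact measure_cdf_le μ hc0 hc1
  · have hF : cdf μ ⁻¹' Iic c = univ :=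
      eq_univ_of_forall fun x => (cdf_le_one μ x).trans hc1
    rw [hF, inter_eq_right.2 fun t ht => (ht.2.trans_le hc1).le, measure_univ, Real.volume_Ioo,
      sub_zero, ENNReal.ofReal_one]

theorem ae_cdf_mem_Ioo : ∀ᵐ x ∂μ, cdf μ x ∈ Ioo 0 1 :=
  ae_of_ae_map (monotone_cdf μ).measurable.aemeasurable
    ((map_cdf μ).symm ▸ ae_restrict_mem measurableSet_Ioo)

theorem aemeasurable_quantile_comp_cdf (ν : Measure ℝ) :
    AEMeasurable (fun x => quantile ν (cdf μ x)) μ :=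
  AEMeasurable.comp_aemeasurable (g := quantile ν) ((map_cdf μ).symm ▸ aemeasurable_quantile)
    (monotone_cdf μ).measurable.aemeasurable

theorem map_quantile_comp_cdf (ν : Measure ℝ) [IsProbabilityMeasure ν] :
    μ.map (fun x => quantile ν (cdf μ x)) = ν := calc
  _ = (μ.map (cdf μ)).map (quantile ν) :=
    (AEMeasurable.map_map_of_aemeasurable ((map_cdf μ).symm ▸ aemeasurable_quantile)
      (monotone_cdf μ).measurable.aemeasurable).symm
  _ = ν := by rw [map_cdf, map_quantile]

end Atomless

section QuadraticCost

variable {γ : Measure (ℝ × ℝ)} (h₁ : Integrable (fun x => x ^ 2) (γ.map Prod.fst))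
  (h₂ : Integrable (fun y => y ^ 2) (γ.map Prod.snd))
include h₁ h₂

theorem integrable_fst_mul_snd : Integrable (fun p => p.1 * p.2) γ := by
  have h₁' : Integrable (fun p => p.1 ^ 2) γ :=
    (integrable_map_measure (by fun_prop) measurable_fst.aemeasurable).1 h₁
  have h₂' : Integrable (fun p => p.2 ^ 2) γ :=
    (integrable_map_measure (by fun_prop) measurable_snd.aemeasurable).1 h₂
  exact ((memLp_two_iff_integrable_sq measurable_fst.aestronglyMeasurable).2 h₁').integrable_mul
    ((memLp_two_iff_integrable_sq measurable_snd.aestronglyMeasurable).2 h₂')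

theorem integral_norm_sub_sq :
    ∫ p, ‖p.1 - p.2‖ ^ 2 ∂γ =
      ∫ x, x ^ 2 ∂(γ.map Prod.fst) + ∫ y, y ^ 2 ∂(γ.map Prod.snd) - 2 * ∫ p, p.1 * p.2 ∂γ := by
  have h₁' : Integrable (fun p => p.1 ^ 2) γ :=
    (integrable_map_measure (by fun_prop) measurable_fst.aemeasurable).1 h₁
  have h₂' : Integrable (fun p => p.2 ^ 2) γ :=
    (integrable_map_measure (by fun_prop) measurable_snd.aemeasurable).1 h₂
  have hexpand (p : ℝ × ℝ) : ‖p.1 - p.2‖ ^ 2 = p.1 ^ 2 + p.2 ^ 2 - 2 * (p.1 * p.2) := by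
    rw [Real.norm_eq_abs, sq_abs]
    ring
  simp_rw [hexpand]
  rw [integral_sub (f := fun p => p.1 ^ 2 + p.2 ^ 2) (h₁'.add h₂')
      ((integrable_fst_mul_snd h₁ h₂).const_mul 2),
    integral_add h₁' h₂', integral_const_mul,
    integral_map measurable_fst.aemeasurable (by fun_prop),
    integral_map measurable_snd.aemeasurable (by fun_prop)]

end QuadraticCost

section Hoeffding

noncomputable def layer (x s : ℝ) : ℝ := (Ico 0 x).indicator 1 s - (Ico x 0).indicator 1 s

theorem layer_eq_indicator (x s : ℝ) :
    layer x s = (Ioi s).indicator 1 x - (Iio 0).indicator 1 s := by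
  simp only [layer, indicator_apply, mem_Ico, mem_Ioi, mem_Iio, Pi.one_apply]
  split_ifs <;> grind

theorem measurable_layer : Measurable (Function.uncurry layer) := by
  simp only [Function.uncurry_def, layer_eq_indicator, indicator_apply, mem_Ioi, mem_Iio,
    Pi.one_apply]
  exact (Measurable.ite (measurableSet_lt measurable_snd measurable_fst) measurable_const
    measurable_const).sub (Measurable.ite (measurableSet_lt measurable_snd measurable_const)
      measurable_const measurable_const)

theorem integrable_indicator_Ico_one (a b : ℝ) : Integrable ((Ico a b).indicator (1 : ℝ → ℝ)) :=
  (integrableOn_const measure_Ico_lt_top.ne).integrable_indicator measurableSet_Ico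

theorem integrable_layer (x : ℝ) : Integrable (layer x) :=
  (integrable_indicator_Ico_one 0 x).sub (integrable_indicator_Ico_one x 0)

theorem integral_layer (x : ℝ) : ∫ s, layer x s = x := by
  simp only [layer]
  rw [integral_sub (integrable_indicator_Ico_one 0 x) (integrable_indicator_Ico_one x 0),
    integral_indicator_one measurableSet_Ico, integral_indicator_one measurableSet_Ico,
    Real.volume_real_Ico, Real.volume_real_Ico]
  rcases le_total 0 x with hx | hx <;> simp [hx]

theorem integral_abs_layer (x : ℝ) : ∫ s, |layer x s| = |x| := by
  rcases le_total 0 x with hx | hx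
  · have hpos (s : ℝ) : 0 ≤ layer x s := by
      simp [layer, Ico_eq_empty (not_lt.2 hx), indicator_nonneg]
    simp_rw [abs_of_nonneg (hpos _), integral_layer, abs_of_nonneg hx]
  · have hneg (s : ℝ) : layer x s ≤ 0 := by
      simp [layer, Ico_eq_empty (not_lt.2 hx), indicator_nonneg]
    simp_rw [abs_of_nonpos (hneg _), integral_neg, integral_layer, abs_of_nonpos hx]

variable {γ : Measure (ℝ × ℝ)}

theorem integrable_layer_mul_layer [SFinite γ] (hint : Integrable (fun p => p.1 * p.2) γ) :
    Integrable (fun z : (ℝ × ℝ) × (ℝ × ℝ) => layer z.1.1 z.2.1 * layer z.1.2 z.2.2)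
      (γ.prod volume) := by
  have hmeas : Measurable fun z : (ℝ × ℝ) × (ℝ × ℝ) => layer z.1.1 z.2.1 * layer z.1.2 z.2.2 :=
    (measurable_layer.comp (measurable_fst.fst.prodMk measurable_snd.fst)).mul
      (measurable_layer.comp (measurable_fst.snd.prodMk measurable_snd.snd))
  refine (integrable_prod_iff hmeas.aestronglyMeasurable).2 ⟨ae_of_all _ fun p => ?_, ?_⟩
  · rw [Measure.volume_eq_prod ℝ ℝ]
    exact (integrable_layer p.1).mul_prod (integrable_layer p.2)
  · have hnorm (p : ℝ × ℝ) : ∫ q : ℝ × ℝ, ‖layer p.1 q.1 * layer p.2 q.2‖ = ‖p.1 * p.2‖ := by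
      simp_rw [Measure.volume_eq_prod ℝ ℝ, norm_mul, Real.norm_eq_abs]
      rw [integral_prod_mul (fun s => |layer p.1 s|) (fun t => |layer p.2 t|),
        integral_abs_layer, integral_abs_layer]
    simp_rw [hnorm]
    exact hint.norm

theorem integral_fst_mul_snd_eq_integral_layer [SFinite γ]
    (hint : Integrable (fun p => p.1 * p.2) γ) :
    ∫ p, p.1 * p.2 ∂γ = ∫ q : ℝ × ℝ, ∫ p, layer p.1 q.1 * layer p.2 q.2 ∂γ := by
  rw [← integral_integral_swap (f := fun p q : ℝ × ℝ => layer p.1 q.1 * layer p.2 q.2)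
    (integrable_layer_mul_layer hint)]
  congr 1 with p
  rw [Measure.volume_eq_prod ℝ ℝ, integral_prod_mul (layer p.1) (layer p.2), integral_layer,
    integral_layer]

theorem integral_layer_mul_layer [IsFiniteMeasure γ] (s t : ℝ) :
    ∫ p, layer p.1 s * layer p.2 t ∂γ =
      γ.real (Ioi s ×ˢ Ioi t) - (Iio 0).indicator 1 t * (γ.map Prod.fst).real (Ioi s)
        - (Iio 0).indicator 1 s * (γ.map Prod.snd).real (Ioi t)
        + (Iio 0).indicator 1 s * (Iio 0).indicator 1 t * (γ.map Prod.fst).real univ := by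
  set a : ℝ := (Iio 0).indicator 1 s with ha
  set b : ℝ := (Iio 0).indicator 1 t with hb
  have hA : MeasurableSet (Prod.fst ⁻¹' Ioi s : Set (ℝ × ℝ)) := measurable_fst measurableSet_Ioi
  have hB : MeasurableSet (Prod.snd ⁻¹' Ioi t : Set (ℝ × ℝ)) := measurable_snd measurableSet_Ioi
  have hexpand (p : ℝ × ℝ) : layer p.1 s * layer p.2 t =
      (Ioi s ×ˢ Ioi t).indicator 1 p - b * (Prod.fst ⁻¹' Ioi s).indicator 1 p
        - a * (Prod.snd ⁻¹' Ioi t).indicator 1 p + a * b := by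
    simp only [ha, hb, layer_eq_indicator, indicator_apply, mem_prod, Pi.one_apply]
    split_ifs <;> simp_all
  have hAB : MeasurableSet (Ioi s ×ˢ Ioi t) := measurableSet_Ioi.prod measurableSet_Ioi
  have hI {S : Set (ℝ × ℝ)} (hS : MeasurableSet S) : Integrable (S.indicator 1) γ :=
    (integrable_const (1 : ℝ)).indicator hS
  simp_rw [hexpand]
  rw [integral_add (f := fun p => (Ioi s ×ˢ Ioi t).indicator 1 p
      - b * (Prod.fst ⁻¹' Ioi s).indicator 1 p - a * (Prod.snd ⁻¹' Ioi t).indicator 1 p)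
      (((hI hAB).sub ((hI hA).const_mul b)).sub ((hI hB).const_mul a)) (integrable_const _),
    integral_sub (f := fun p => (Ioi s ×ˢ Ioi t).indicator 1 p
      - b * (Prod.fst ⁻¹' Ioi s).indicator 1 p) ((hI hAB).sub ((hI hA).const_mul b))
      ((hI hB).const_mul a),
    integral_sub (hI hAB) ((hI hA).const_mul b),
    integral_const_mul, integral_const_mul, integral_indicator_one hAB,
    integral_indicator_one hA, integral_indicator_one hB, integral_const,
    map_measureReal_apply measurable_fst measurableSet_Ioi,
    map_measureReal_apply measurable_snd measurableSet_Ioi,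
    map_measureReal_apply measurable_fst MeasurableSet.univ, preimage_univ, smul_eq_mul]
  ring

end Hoeffding

theorem integral_fst_mul_snd_le_of_measure_Ioi_prod_Ioi_le {γ γ' : Measure (ℝ × ℝ)}
    [IsFiniteMeasure γ] [IsFiniteMeasure γ'] (hfst : γ.map Prod.fst = γ'.map Prod.fst)
    (hsnd : γ.map Prod.snd = γ'.map Prod.snd) (hint : Integrable (fun p => p.1 * p.2) γ)
    (hint' : Integrable (fun p => p.1 * p.2) γ')
    (hle : ∀ s t, γ (Ioi s ×ˢ Ioi t) ≤ γ' (Ioi s ×ˢ Ioi t)) :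
    ∫ p, p.1 * p.2 ∂γ ≤ ∫ p, p.1 * p.2 ∂γ' := by
  rw [integral_fst_mul_snd_eq_integral_layer hint, integral_fst_mul_snd_eq_integral_layer hint']
  refine integral_mono (integrable_layer_mul_layer hint).integral_prod_right
    (integrable_layer_mul_layer hint').integral_prod_right fun q => ?_
  simp only [integral_layer_mul_layer, hfst, hsnd]
  gcongr
  exact ENNReal.toReal_mono (measure_ne_top _ _) (hle q.1 q.2)

theorem measure_Ioi_inter_preimage_Ioi_eq_min {α β : Type*} [LinearOrder α] [Preorder β]
    [MeasurableSpace α] {μ : Measure α} {T : α → β} {G : Set α} (hG : ∀ᵐ x ∂μ, x ∈ G)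
    (hT : MonotoneOn T G) (s : α) (t : β) :
    μ (Ioi s ∩ T ⁻¹' Ioi t) = min (μ (Ioi s)) (μ (T ⁻¹' Ioi t)) := by
  have hGc : μ Gᶜ = 0 := ae_iff.1 hG
  refine le_antisymm (le_min (measure_mono inter_subset_left) (measure_mono inter_subset_right)) ?_
  have hnested : Ioi s ∩ G ⊆ T ⁻¹' Ioi t ∨ T ⁻¹' Ioi t ∩ G ⊆ Ioi s := by
    rw [or_iff_not_imp_left, not_subset]
    rintro ⟨a, ⟨has, haG⟩, hat⟩ u ⟨hut, huG⟩
    rcases le_total u a with hua | hau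
    · exact absurd (hut.trans_le (hT huG haG hua)) hat
    · exact has.trans_le hau
  rcases hnested with h | h
  · calc min (μ (Ioi s)) (μ (T ⁻¹' Ioi t)) ≤ μ (Ioi s ∩ G) :=
          (min_le_left _ _).trans (measure_inter_conull hGc).ge
      _ ≤ _ := measure_mono (subset_inter inter_subset_left h)
  · calc min (μ (Ioi s)) (μ (T ⁻¹' Ioi t)) ≤ μ (T ⁻¹' Ioi t ∩ G) :=
          (min_le_right _ _).trans (measure_inter_conull hGc).ge
      _ ≤ _ := measure_mono (subset_inter h inter_subset_left)

section GraphCoupling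

variable {μ : Measure ℝ} {T : ℝ → ℝ}

theorem map_fst_map_graph (hTm : AEMeasurable T μ) :
    (μ.map fun x => (x, T x)).map Prod.fst = μ :=
  (Measure.fst_map_prodMk₀ hTm).trans Measure.map_id'

theorem map_snd_map_graph : (μ.map fun x => (x, T x)).map Prod.snd = μ.map T :=
  Measure.snd_map_prodMk₀ aemeasurable_id'

theorem integral_norm_sub_sq_map_graph (hTm : AEMeasurable T μ) :
    ∫ p, ‖p.1 - p.2‖ ^ 2 ∂(μ.map fun x => (x, T x)) = ∫ x, (T x - x) ^ 2 ∂μ := by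
  rw [integral_map (aemeasurable_id'.prodMk hTm) (by fun_prop)]
  simp_rw [Real.norm_eq_abs, sq_abs, sub_sq_comm]

theorem measure_Ioi_prod_Ioi_le_map_graph {G : Set ℝ} (hTm : AEMeasurable T μ)
    (hG : ∀ᵐ x ∂μ, x ∈ G) (hT : MonotoneOn T G) {γ : Measure (ℝ × ℝ)}
    (hfst : γ.map Prod.fst = μ) (hsnd : γ.map Prod.snd = μ.map T) (s t : ℝ) :
    γ (Ioi s ×ˢ Ioi t) ≤ μ.map (fun x => (x, T x)) (Ioi s ×ˢ Ioi t) := by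
  rw [Measure.map_apply_of_aemeasurable (aemeasurable_id'.prodMk hTm)
    (measurableSet_Ioi.prod measurableSet_Ioi), mk_preimage_prod, preimage_id',
    measure_Ioi_inter_preimage_Ioi_eq_min hG hT]
  refine le_min ?_ ?_
  · calc γ (Ioi s ×ˢ Ioi t) ≤ γ (Prod.fst ⁻¹' Ioi s) := measure_mono fun p hp => hp.1
      _ = μ (Ioi s) := by rw [← hfst, Measure.map_apply measurable_fst measurableSet_Ioi]
  · calc γ (Ioi s ×ˢ Ioi t) ≤ γ (Prod.snd ⁻¹' Ioi t) := measure_mono fun p hp => hp.2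
      _ = μ (T ⁻¹' Ioi t) := by
        rw [← Measure.map_apply_of_aemeasurable hTm measurableSet_Ioi, ← hsnd,
          Measure.map_apply measurable_snd measurableSet_Ioi]

theorem integral_norm_sub_sq_map_graph_le [IsFiniteMeasure μ] {G : Set ℝ}
    (hTm : AEMeasurable T μ) (hG : ∀ᵐ x ∂μ, x ∈ G) (hT : MonotoneOn T G)
    (h2μ : Integrable (fun x => x ^ 2) μ) (h2T : Integrable (fun y => y ^ 2) (μ.map T))
    {γ : Measure (ℝ × ℝ)} (hfst : γ.map Prod.fst = μ) (hsnd : γ.map Prod.snd = μ.map T) :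
    ∫ p, ‖p.1 - p.2‖ ^ 2 ∂(μ.map fun x => (x, T x)) ≤ ∫ p, ‖p.1 - p.2‖ ^ 2 ∂γ := by
  have : IsFiniteMeasure γ :=
    (Measure.isFiniteMeasure_map_iff measurable_fst.aemeasurable).1 (hfst ▸ ‹_›)
  have h₁ : Integrable (fun x => x ^ 2) (γ.map Prod.fst) := by rwa [hfst]
  have h₂ : Integrable (fun y => y ^ 2) (γ.map Prod.snd) := by rwa [hsnd]
  have h₁₀ := (map_fst_map_graph hTm).symm ▸ h2μ
  have h₂₀ := (map_snd_map_graph (T := T)).symm ▸ h2T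
  rw [integral_norm_sub_sq h₁ h₂, integral_norm_sub_sq h₁₀ h₂₀, hfst, hsnd, map_fst_map_graph hTm,
    map_snd_map_graph]
  gcongr ?_ - 2 * ?_
  exact integral_fst_mul_snd_le_of_measure_Ioi_prod_Ioi_le
    (hfst.trans (map_fst_map_graph hTm).symm) (hsnd.trans map_snd_map_graph.symm)
    (integrable_fst_mul_snd h₁ h₂) (integrable_fst_mul_snd h₁₀ h₂₀)
    (measure_Ioi_prod_Ioi_le_map_graph hTm hG hT hfst hsnd)

end GraphCoupling

theorem W2sq_eq_of_forall_le {E : Type*} [NormedAddCommGroup E] [MeasurableSpace E]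
    {μ ν : Measure E} {γ₀ : Measure (E × E)} (hfst : γ₀.map Prod.fst = μ)
    (hsnd : γ₀.map Prod.snd = ν)
    (hmin : ∀ γ : Measure (E × E), γ.map Prod.fst = μ → γ.map Prod.snd = ν →
      ∫ p, ‖p.1 - p.2‖ ^ 2 ∂γ₀ ≤ ∫ p, ‖p.1 - p.2‖ ^ 2 ∂γ) :
    W2sq μ ν = ∫ p, ‖p.1 - p.2‖ ^ 2 ∂γ₀ :=
  IsLeast.csInf_eq ⟨⟨γ₀, ⟨hfst, hsnd⟩, rfl⟩, by
    rintro _ ⟨γ, ⟨h₁, h₂⟩, rfl⟩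
    exact hmin γ h₁ h₂⟩

/-- the monotone rearrangement `Q_ν ∘ F_μ` pushes `μ` forward to `ν`
and is an optimal transport map for the quadratic cost. -/
theorem monotone_rearrangement_optimal
    (μ ν : Measure ℝ) [IsProbabilityMeasure μ] [IsProbabilityMeasure ν]
    [NullSingletonClass μ]
    (h2μ : Integrable (fun x => x ^ 2) μ) (h2ν : Integrable (fun x => x ^ 2) ν) :
    μ.map (fun x => quantile ν (ProbabilityTheory.cdf μ x)) = ν ∧
    W2sq μ ν = ∫ x, (quantile ν (ProbabilityTheory.cdf μ x) - x) ^ 2 ∂μ := by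
  set T := fun x => quantile ν (cdf μ x)
  have hTm : AEMeasurable T μ := aemeasurable_quantile_comp_cdf μ ν
  have hTν : μ.map T = ν := map_quantile_comp_cdf μ ν
  have hT : MonotoneOn T (cdf μ ⁻¹' Ioo 0 1) :=
    quantile_monotoneOn.comp ((monotone_cdf μ).monotoneOn _) (mapsTo_preimage _ _)
  refine ⟨hTν, integral_norm_sub_sq_map_graph hTm ▸ ?_⟩
  refine W2sq_eq_of_forall_le (map_fst_map_graph hTm) (map_snd_map_graph.trans hTν)
    fun γ hfst hsnd => ?_
  exact integral_norm_sub_sq_map_graph_le hTm (ae_cdf_mem_Ioo μ) hT h2μ (hTν ▸ h2ν) hfst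
    (hsnd.trans hTν.symm)
end

section
/- Let μ₁, μ₂ be atomless probability measures on ℝ with finite second moment, with quantile functions Q₁, Q₂, and let γ ∈ [0,1]. Then the pushforward of μ₁ under the map (1-γ)·id + γ·T, where T = Q₂ ∘ F₁ is the monotone rearrangement from μ₁ to μ₂, has quantile function (1-γ)Q₁ + γQ₂. -/
/-!
Lebesgue measure on `(0, 1)` pushed forward by a function `G` that is nondecreasing and
left-continuous on `(0, 1)` has quantile function `G` there; with `G = Q_μ` this says that
every probability measure `μ` is the law of `Q_μ` under the uniform distribution. When `μ₁` is
atomless, `F₁ ∘ Q₁ = id` on `(0, 1)`, so the map `x ↦ (1 - γ) x + γ Q₂ (F₁ x)` composed with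
`Q₁` is `(1 - γ) Q₁ + γ Q₂`, which is again nondecreasing and left-continuous.
-/

open MeasureTheory ProbabilityTheory Filter

open Set Topology

section Quantile

variable (μ : Measure ℝ)

lemma nonempty_setOf_le_cdf {t : ℝ} (ht : t < 1) : {x | t ≤ cdf μ x}.Nonempty :=
  ((tendsto_cdf_atTop μ).eventually (eventually_ge_nhds ht)).exists

lemma bddBelow_setOf_le_cdf {t : ℝ} (ht : 0 < t) : BddBelow {x | t ≤ cdf μ x} := by
  obtain ⟨y, hy⟩ := ((tendsto_cdf_atBot μ).eventually (eventually_lt_nhds ht)).exists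
  exact ⟨y, fun z hz => le_of_not_ge fun hzy => (hz.trans (monotone_cdf μ hzy)).not_gt hy⟩

lemma le_cdf_quantile {t : ℝ} (ht : t ∈ Ioo 0 1) : t ≤ cdf μ (quantile μ t) := by
  have hlt : ∀ x ∈ Ioi (quantile μ t), t ≤ cdf μ x := fun x hx => by
    obtain ⟨y, hy, hyx⟩ :=
      (csInf_lt_iff (bddBelow_setOf_le_cdf μ ht.1) (nonempty_setOf_le_cdf μ ht.2)).mp hx
    exact hy.trans (monotone_cdf μ hyx.le)
  exact ge_of_tendsto (((cdf μ).right_continuous _).mono Ioi_subset_Ici_self).tendsto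
    (eventually_nhdsWithin_of_forall hlt)

lemma quantile_le_iff_s2 {t x : ℝ} (ht : t ∈ Ioo 0 1) : quantile μ t ≤ x ↔ t ≤ cdf μ x :=
  ⟨fun h => (le_cdf_quantile μ ht).trans (monotone_cdf μ h),
    fun h => csInf_le (bddBelow_setOf_le_cdf μ ht.1) h⟩

lemma monotoneOn_quantile : MonotoneOn (quantile μ) (Ioo 0 1) :=
  fun _ hs _ ht hst => (quantile_le_iff_s2 μ hs).mpr (hst.trans (le_cdf_quantile μ ht))

lemma tendsto_quantile_nhdsLT {t : ℝ} (ht : t ∈ Ioo 0 1) :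
    Tendsto (quantile μ) (𝓝[<] t) (𝓝 (quantile μ t)) := by
  have hpos : ∀ᶠ s in 𝓝[<] t, 0 < s :=
    eventually_nhdsWithin_of_eventually_nhds (eventually_gt_nhds ht.1)
  have hmem : ∀ᶠ s in 𝓝[<] t, s ∈ Ioo 0 1 := by
    filter_upwards [hpos, self_mem_nhdsWithin] with s hs hst using ⟨hs, hst.trans ht.2⟩
  refine tendsto_order.2 ⟨fun a ha => ?_, fun a ha => ?_⟩
  · have hFa : cdf μ a < t := lt_of_not_ge fun h => ha.not_ge ((quantile_le_iff_s2 μ ht).mpr h)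
    obtain ⟨s₀, hs₀, hs₀t⟩ := exists_between (max_lt hFa ht.1)
    have hs₀01 : s₀ ∈ Ioo 0 1 := ⟨(le_max_right _ _).trans_lt hs₀, hs₀t.trans ht.2⟩
    have ha₀ : a < quantile μ s₀ := lt_of_not_ge fun h =>
      ((le_max_left _ _).trans_lt hs₀).not_ge ((quantile_le_iff_s2 μ hs₀01).mp h)
    filter_upwards [hmem, eventually_nhdsWithin_of_eventually_nhds (eventually_gt_nhds hs₀t)]
      with s hs hs₀s
    exact ha₀.trans_le (monotoneOn_quantile μ hs₀01 hs hs₀s.le)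
  · filter_upwards [hmem, self_mem_nhdsWithin] with s hs hst
    exact (monotoneOn_quantile μ hs ht hst.le).trans_lt ha

lemma cdf_quantile [IsProbabilityMeasure μ] [NullSingletonClass μ] {t : ℝ} (ht : t ∈ Ioo 0 1) :
    cdf μ (quantile μ t) = t := by
  refine le_antisymm ?_ (le_cdf_quantile μ ht)
  have hleft : Function.leftLim (cdf μ) (quantile μ t) ≤ t := by
    rw [(monotone_cdf μ).leftLim_eq_sSup]
    refine csSup_le (nonempty_Iio.image _) ?_
    rintro _ ⟨x, hx, rfl⟩
    exact le_of_not_ge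
      (notMem_of_lt_csInf (s := {x | t ≤ cdf μ x}) hx (bddBelow_setOf_le_cdf μ ht.1))
  have hjump : (cdf μ).measure {quantile μ t} = 0 := by
    rw [measure_cdf, measure_singleton]
  rw [StieltjesFunction.measure_singleton, ENNReal.ofReal_eq_zero] at hjump
  linarith

end Quantile

section UniformPushforward

local notation "𝕌" => volume.restrict (Ioo (0 : ℝ) 1)

instance : IsProbabilityMeasure 𝕌 := ⟨by simp [Real.volume_Ioo]⟩

lemma aemeasurable_quantile_s2 (μ : Measure ℝ) : AEMeasurable (quantile μ) 𝕌 :=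
  aemeasurable_restrict_of_monotoneOn measurableSet_Ioo (monotoneOn_quantile μ)

lemma eq_of_forall_mem_Ioo_le_iff {a b : ℝ} (ha : a ∈ Icc 0 1) (hb : b ∈ Icc 0 1)
    (h : ∀ t ∈ Ioo (0 : ℝ) 1, t ≤ a ↔ t ≤ b) : a = b := by
  have key : ∀ {a b : ℝ}, a ∈ Icc (0 : ℝ) 1 → b ∈ Icc (0 : ℝ) 1 →
      (∀ t ∈ Ioo (0 : ℝ) 1, t ≤ a → t ≤ b) → a ≤ b := fun ha hb h => by
    by_contra! hba
    obtain ⟨t, hbt, hta⟩ := exists_between hba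
    exact hbt.not_ge (h t ⟨hb.1.trans_lt hbt, hta.trans_le ha.2⟩ hta.le)
  exact le_antisymm (key ha hb fun t ht => (h t ht).1) (key hb ha fun t ht => (h t ht).2)

lemma le_cdf_map_volume_Ioo_iff {G : ℝ → ℝ} (hG : MonotoneOn G (Ioo 0 1)) {t : ℝ}
    (ht : t ∈ Ioo 0 1) (hGt : Tendsto G (𝓝[<] t) (𝓝 (G t))) (x : ℝ) :
    t ≤ cdf (Measure.map G 𝕌) x ↔ G t ≤ x := by
  -- `G ⁻¹' Iic x ∩ Ioo 0 1` is an initial segment of `(0, 1)`; left-continuity at `t` decides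
  -- whether it has length at least `t`.
  have hGm : AEMeasurable G 𝕌 := aemeasurable_restrict_of_monotoneOn measurableSet_Ioo hG
  have := Measure.isProbabilityMeasure_map (μ := 𝕌) hGm
  rw [← ENNReal.ofReal_le_ofReal_iff (cdf_nonneg _ x), ofReal_cdf,
    Measure.map_apply_of_aemeasurable hGm measurableSet_Iic,
    Measure.restrict_apply' measurableSet_Ioo]
  constructor
  · intro hvol
    by_contra! hxG
    obtain ⟨s, ⟨hxs, hs⟩, hst⟩ := (((hGt.eventually (eventually_gt_nhds hxG)).and
      (eventually_nhdsWithin_of_eventually_nhds (eventually_gt_nhds ht.1))).and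
      self_mem_nhdsWithin).exists
    have hsub : G ⁻¹' Iic x ∩ Ioo 0 1 ⊆ Ioo 0 s := fun u ⟨hux, hu⟩ =>
      ⟨hu.1, lt_of_not_ge fun hsu => hxs.not_ge ((hG ⟨hs, hst.trans ht.2⟩ hu hsu).trans hux)⟩
    have := hvol.trans (measure_mono hsub)
    rw [Real.volume_Ioo, sub_zero, ENNReal.ofReal_le_ofReal_iff hs.le] at this
    exact hst.not_ge this
  · intro hGtx
    calc ENNReal.ofReal t = volume (Ioo 0 t) := by rw [Real.volume_Ioo, sub_zero]
      _ ≤ volume (G ⁻¹' Iic x ∩ Ioo 0 1) := measure_mono fun s hs =>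
          ⟨(hG ⟨hs.1, hs.2.trans ht.2⟩ ht hs.2.le).trans hGtx, hs.1, hs.2.trans ht.2⟩

lemma quantile_map_volume_Ioo {G : ℝ → ℝ} (hG : MonotoneOn G (Ioo 0 1)) {t : ℝ}
    (ht : t ∈ Ioo 0 1) (hGt : Tendsto G (𝓝[<] t) (𝓝 (G t))) :
    quantile (Measure.map G 𝕌) t = G t := by
  have hset : {x | t ≤ cdf (Measure.map G 𝕌) x} = Ici (G t) :=
    Set.ext (le_cdf_map_volume_Ioo_iff hG ht hGt)
  rw [quantile, hset, csInf_Ici]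

variable (μ : Measure ℝ) [IsProbabilityMeasure μ]

lemma map_quantile_volume_Ioo : Measure.map (quantile μ) 𝕌 = μ := by
  have := Measure.isProbabilityMeasure_map (aemeasurable_quantile_s2 μ)
  refine Measure.eq_of_cdf _ _ (StieltjesFunction.ext fun x => eq_of_forall_mem_Ioo_le_iff
    ⟨cdf_nonneg _ x, cdf_le_one _ x⟩ ⟨cdf_nonneg _ x, cdf_le_one _ x⟩ fun t ht => ?_)
  rw [le_cdf_map_volume_Ioo_iff (monotoneOn_quantile μ) ht (tendsto_quantile_nhdsLT μ ht),
    quantile_le_iff_s2 μ ht]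

lemma map_eq_map_comp_quantile {f : ℝ → ℝ} (hf : AEMeasurable f μ) :
    μ.map f = Measure.map (f ∘ quantile μ) 𝕌 := by
  conv_lhs => rw [← map_quantile_volume_Ioo μ]
  exact AEMeasurable.map_map_of_aemeasurable (by rwa [map_quantile_volume_Ioo])
    (aemeasurable_quantile_s2 μ)

lemma map_cdf_eq_volume_Ioo [NullSingletonClass μ] : μ.map (cdf μ) = 𝕌 := by
  rw [map_eq_map_comp_quantile μ (cdf μ).mono.measurable.aemeasurable]
  refine (Measure.map_congr ?_).trans Measure.map_id
  filter_upwards [ae_restrict_mem measurableSet_Ioo] with t ht using cdf_quantile μ ht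

end UniformPushforward

theorem sgd_step_quantile_general
    (μ₁ μ₂ : Measure ℝ) [IsProbabilityMeasure μ₁] [IsProbabilityMeasure μ₂]
    [NullSingletonClass μ₁]
    (γ : ℝ) (hγ : γ ∈ Set.Icc (0:ℝ) 1) :
    ∀ᵐ t ∂(volume.restrict (Set.Ioo (0:ℝ) 1)),
      quantile
        (μ₁.map (fun x => (1 - γ) * x + γ * quantile μ₂ (ProbabilityTheory.cdf μ₁ x))) t
        = (1 - γ) * quantile μ₁ t + γ * quantile μ₂ t := by
  set G : ℝ → ℝ := fun t => (1 - γ) * quantile μ₁ t + γ * quantile μ₂ t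
  have hG : MonotoneOn G (Ioo 0 1) := fun s hs t ht hst =>
    add_le_add
      (mul_le_mul_of_nonneg_left (monotoneOn_quantile μ₁ hs ht hst) (sub_nonneg.2 hγ.2))
      (mul_le_mul_of_nonneg_left (monotoneOn_quantile μ₂ hs ht hst) hγ.1)
  have htransport : AEMeasurable (fun x => quantile μ₂ (cdf μ₁ x)) μ₁ := by
    refine AEMeasurable.comp_aemeasurable (g := quantile μ₂) ?_
      (cdf μ₁).mono.measurable.aemeasurable
    rw [map_cdf_eq_volume_Ioo]
    exact aemeasurable_quantile_s2 μ₂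
  have hpush : μ₁.map (fun x => (1 - γ) * x + γ * quantile μ₂ (cdf μ₁ x)) =
      (volume.restrict (Ioo 0 1)).map G := by
    rw [map_eq_map_comp_quantile μ₁ (by fun_prop)]
    refine Measure.map_congr ?_
    filter_upwards [ae_restrict_mem measurableSet_Ioo] with t ht
    simp only [Function.comp_apply, cdf_quantile μ₁ ht, G]
  filter_upwards [ae_restrict_mem measurableSet_Ioo] with t ht
  rw [hpush]
  exact quantile_map_volume_Ioo hG ht (((tendsto_quantile_nhdsLT μ₁ ht).const_mul _).add
    ((tendsto_quantile_nhdsLT μ₂ ht).const_mul _))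

/-- the pushforward of `μ₁` under `(1-γ)·id + γ·T`, `T` the monotone
rearrangement from `μ₁` to `μ₂`, has quantile function `(1-γ)Q₁ + γQ₂` (a.e. on `(0,1)`). -/
theorem sgd_step_quantile
    (μ₁ μ₂ : Measure ℝ) [IsProbabilityMeasure μ₁] [IsProbabilityMeasure μ₂]
    [NullSingletonClass μ₁] [NullSingletonClass μ₂]
    (h1 : Integrable (fun x => x ^ 2) μ₁) (h2 : Integrable (fun x => x ^ 2) μ₂)
    (γ : ℝ) (hγ : γ ∈ Set.Icc (0:ℝ) 1) :
    ∀ᵐ t ∂(volume.restrict (Set.Ioo (0:ℝ) 1)),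
      quantile
        (μ₁.map (fun x => (1 - γ) * x + γ * quantile μ₂ (ProbabilityTheory.cdf μ₁ x))) t
        = (1 - γ) * quantile μ₁ t + γ * quantile μ₂ t :=
  sgd_step_quantile_general μ₁ μ₂ γ hγ
end

section
/- Let μ have a log-concave density f on ℝ (so -log f is convex) with quantile function Q. Then the derivative Q'(y) = 1/f(Q(y)) is a convex positive function on (0,1). -/
open MeasureTheory ProbabilityTheory Filter

open Set Real Topology

/-!
The CDF `F` of `μ` has derivative `f > 0`, so it is an increasing bijection of `ℝ` onto `(0,1)`
with inverse `Q`, and the inverse function theorem gives `Q' = 1 / (f ∘ Q)`. Writing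
`f = exp (-g)` with `g` convex, the chain rule gives `f ∘ Q` the right derivative
`f (Q y) · (-g'₊ (Q y)) · Q' y = -g'₊ (Q y)`, which is antitone because `g'₊` is monotone and `Q`
is increasing. Hence `f ∘ Q` is concave, and the reciprocal of a positive concave function is
convex.
-/

section Quantile

variable {μ : Measure ℝ}

lemma cdf_mem_Ioo_of_strictMono (hF : StrictMono (cdf μ)) (x : ℝ) : cdf μ x ∈ Ioo 0 1 :=
  ⟨(cdf_nonneg μ (x - 1)).trans_lt (hF (by linarith)),
    (hF (by linarith : x < x + 1)).trans_le (cdf_le_one μ _)⟩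

lemma quantile_cdf_of_strictMono (hF : StrictMono (cdf μ)) (x : ℝ) :
    quantile μ (cdf μ x) = x := by
  have hset : {z | cdf μ x ≤ cdf μ z} = Ici x := ext fun _ => hF.le_iff_le
  rw [quantile, hset, csInf_Ici]

lemma image_quantile_Ioo_of_strictMono (hF : StrictMono (cdf μ)) :
    quantile μ '' Ioo 0 1 = univ :=
  eq_univ_of_forall fun x =>
    ⟨cdf μ x, cdf_mem_Ioo_of_strictMono hF x, quantile_cdf_of_strictMono hF x⟩

lemma cdf_quantile_of_strictMono (hF : StrictMono (cdf μ)) (hFc : Continuous (cdf μ)) {y : ℝ}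
    (hy : y ∈ Ioo 0 1) : cdf μ (quantile μ y) = y := by
  obtain ⟨x, rfl⟩ : y ∈ range (cdf μ) := mem_range_of_exists_le_of_exists_ge hFc
    (((tendsto_cdf_atBot μ).eventually_lt_const hy.1).exists.imp fun _ => le_of_lt)
    (((tendsto_cdf_atTop μ).eventually_const_lt hy.2).exists.imp fun _ => le_of_lt)
  rw [quantile_cdf_of_strictMono hF]

lemma strictMonoOn_quantile_of_strictMono (hF : StrictMono (cdf μ)) (hFc : Continuous (cdf μ)) :
    StrictMonoOn (quantile μ) (Ioo 0 1) := fun y₁ hy₁ y₂ hy₂ hlt =>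
  hF.lt_iff_lt.mp <| by
    rwa [cdf_quantile_of_strictMono hF hFc hy₁, cdf_quantile_of_strictMono hF hFc hy₂]

lemma continuousAt_quantile_of_strictMono (hF : StrictMono (cdf μ)) (hFc : Continuous (cdf μ))
    {y : ℝ} (hy : y ∈ Ioo 0 1) : ContinuousAt (quantile μ) y :=
  continuousAt_of_monotoneOn_of_image_mem_nhds
    (strictMonoOn_quantile_of_strictMono hF hFc).monotoneOn (Ioo_mem_nhds hy.1 hy.2)
    (by rw [image_quantile_Ioo_of_strictMono hF]; exact univ_mem)

lemma hasDerivAt_quantile_of_strictMono (hF : StrictMono (cdf μ)) (hFc : Continuous (cdf μ))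
    {y d : ℝ} (hy : y ∈ Ioo 0 1) (hd : HasDerivAt (cdf μ) d (quantile μ y)) (hd₀ : d ≠ 0) :
    HasDerivAt (quantile μ) d⁻¹ y :=
  hd.of_local_left_inverse (continuousAt_quantile_of_strictMono hF hFc hy) hd₀ <|
    eventually_of_mem (Ioo_mem_nhds hy.1 hy.2) fun _ hz => cdf_quantile_of_strictMono hF hFc hz

end Quantile

section Density

variable {f : ℝ → ℝ} {μ : Measure ℝ} [IsProbabilityMeasure μ]

lemma cdf_sub_cdf_of_withDensity (hμ : μ = volume.withDensity fun x => ENNReal.ofReal (f x))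
    (hf₀ : ∀ x, 0 ≤ f x) (hfm : Measurable f) {a b : ℝ} (hab : a ≤ b) :
    cdf μ b - cdf μ a = ∫ x in a..b, f x := by
  rw [cdf_eq_real, cdf_eq_real, ← measureReal_sdiff (Iic_subset_Iic.2 hab) measurableSet_Iic,
    show Iic b \ Iic a = Ioc a b by ext; simp [and_comm], intervalIntegral.integral_of_le hab,
    measureReal_def, hμ, withDensity_apply _ measurableSet_Ioc,
    integral_eq_lintegral_of_nonneg_ae (ae_of_all _ hf₀) hfm.aestronglyMeasurable]

lemma hasDerivAt_cdf_of_withDensity (hμ : μ = volume.withDensity fun x => ENNReal.ofReal (f x))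
    (hf₀ : ∀ x, 0 ≤ f x) (hfc : Continuous f) (x : ℝ) : HasDerivAt (cdf μ) (f x) x := by
  have hcdf : ∀ z, cdf μ z = cdf μ x + ∫ t in x..z, f t := fun z => by
    rcases le_total x z with hxz | hzx
    · linarith [cdf_sub_cdf_of_withDensity hμ hf₀ hfc.measurable hxz]
    · linarith [cdf_sub_cdf_of_withDensity hμ hf₀ hfc.measurable hzx,
        intervalIntegral.integral_symm (μ := volume) (f := f) x z]
  rw [show (cdf μ : ℝ → ℝ) = _ from funext hcdf]
  exact ((hfc.integral_hasStrictDerivAt x x).hasDerivAt).const_add _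

end Density

lemma ConcaveOn.convexOn_inv {E : Type*} [AddCommMonoid E] [Module ℝ E] {s : Set E} {k : E → ℝ}
    (hk : ConcaveOn ℝ s k) (hpos : ∀ x ∈ s, 0 < k x) : ConvexOn ℝ s fun x => (k x)⁻¹ := by
  refine ⟨hk.1, fun x hx y hy a b ha hb hab => ?_⟩
  have hmid : 0 < a • k x + b • k y := convex_Ioi (0 : ℝ) (hpos x hx) (hpos y hy) ha hb hab
  calc (k (a • x + b • y))⁻¹ ≤ (a • k x + b • k y)⁻¹ := inv_anti₀ hmid (hk.2 hx hy ha hb hab)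
    _ ≤ a • (k x)⁻¹ + b • (k y)⁻¹ := by
      simpa only [zpow_neg_one] using (convexOn_zpow (-1)).2 (hpos x hx) (hpos y hy) ha hb hab

lemma concaveOn_of_hasDerivWithinAt_Ioi_of_antitoneOn {D : Set ℝ} (hD : Convex ℝ D)
    {k φ : ℝ → ℝ} (hk : ContinuousOn k D) (hkφ : ∀ x ∈ D, HasDerivWithinAt k (φ x) (Ioi x) x)
    (hφ : AntitoneOn φ D) : ConcaveOn ℝ D k := by
  have hIcc : ∀ {x y}, x ∈ D → y ∈ D → Icc x y ⊆ D := fun hx hy => hD.ordConnected.out hx hy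
  have hint : ∀ {x y}, x ∈ D → y ∈ D → x ≤ y → IntervalIntegrable φ volume x y :=
    fun hx hy hxy => (hφ.mono (uIcc_of_le hxy ▸ hIcc hx hy)).intervalIntegrable
  have hftc : ∀ {x y}, x ∈ D → y ∈ D → x ≤ y → ∫ t in x..y, φ t = k y - k x :=
    fun hx hy hxy => intervalIntegral.integral_eq_sub_of_hasDeriv_right_of_le hxy
      (hk.mono (hIcc hx hy)) (fun t ht => hkφ t (hIcc hx hy (Ioo_subset_Icc_self ht)))
      (hint hx hy hxy)
  refine concaveOn_of_slope_anti_adjacent hD fun {x y z} hx hz hxy hyz => ?_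
  have hy : y ∈ D := hIcc hx hz ⟨hxy.le, hyz.le⟩
  have hright : k z - k y ≤ (z - y) * φ y := by
    rw [← hftc hy hz hyz.le, ← smul_eq_mul, ← intervalIntegral.integral_const]
    exact intervalIntegral.integral_mono_on hyz.le (hint hy hz hyz.le) intervalIntegrable_const
      fun t ht => hφ hy (hIcc hy hz ht) ht.1
  have hleft : (y - x) * φ y ≤ k y - k x := by
    rw [← hftc hx hy hxy.le, ← smul_eq_mul, ← intervalIntegral.integral_const]
    exact intervalIntegral.integral_mono_on hxy.le intervalIntegrable_const (hint hx hy hxy.le)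
      fun t ht => hφ (hIcc hx hy ht) hy ht.2
  calc (k z - k y) / (z - y) ≤ φ y := (div_le_iff₀' (sub_pos.2 hyz)).2 hright
    _ ≤ (k y - k x) / (y - x) := (le_div_iff₀' (sub_pos.2 hxy)).2 hleft

lemma HasDerivWithinAt.comp_Ioi_of_strictMonoOn {h Q : ℝ → ℝ} {h' q' y : ℝ} {s : Set ℝ}
    (hh : HasDerivWithinAt h h' (Ioi (Q y)) (Q y)) (hQ : HasDerivAt Q q' y)
    (hQs : StrictMonoOn Q s) (hs : s ∈ 𝓝 y) : HasDerivWithinAt (h ∘ Q) (h' * q') (Ioi y) y := by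
  have hmaps : MapsTo Q (Ioi y ∩ s) (Ioi (Q y)) := fun _ hz => hQs (mem_of_mem_nhds hs) hz.2 hz.1
  exact (hh.comp y (hQ.hasDerivWithinAt.mono inter_subset_left) hmaps).mono_of_mem_nhdsWithin
    (inter_mem self_mem_nhdsWithin (mem_nhdsWithin_of_mem_nhds hs))

section LogConcave

variable {f : ℝ → ℝ}

lemma continuous_of_convexOn_neg_log (hf : ∀ x, 0 < f x)
    (hlc : ConvexOn ℝ univ fun x => -log (f x)) : Continuous f := by
  have hg : Continuous fun x => -log (f x) := continuousOn_univ.mp (hlc.continuousOn isOpen_univ)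
  simpa only [Pi.neg_apply, neg_neg, fun x => exp_log (hf x)] using hg.neg.rexp

lemma hasDerivWithinAt_Ioi_of_convexOn_neg_log (hf : ∀ x, 0 < f x)
    (hlc : ConvexOn ℝ univ fun x => -log (f x)) (x : ℝ) :
    HasDerivWithinAt f (f x * -derivWithin (fun x => -log (f x)) (Ioi x) x) (Ioi x) x := by
  have := (hlc.hasDerivWithinAt_rightDeriv_of_mem_interior (by simp : x ∈ interior univ)).neg.exp
  simpa only [Pi.neg_apply, neg_neg, fun x => exp_log (hf x)] using this

lemma concaveOn_comp_quantile_of_convexOn_neg_log {μ : Measure ℝ} (hf : ∀ x, 0 < f x)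
    (hlc : ConvexOn ℝ univ fun x => -log (f x)) (hF : StrictMono (cdf μ))
    (hFc : Continuous (cdf μ)) (hFd : ∀ x, HasDerivAt (cdf μ) (f x) x) :
    ConcaveOn ℝ (Ioo 0 1) (f ∘ quantile μ) := by
  have hQ := strictMonoOn_quantile_of_strictMono hF hFc
  refine concaveOn_of_hasDerivWithinAt_Ioi_of_antitoneOn (convex_Ioo 0 1)
    (φ := fun y => -derivWithin (fun x => -log (f x)) (Ioi (quantile μ y)) (quantile μ y))
    (fun y hy => ((continuous_of_convexOn_neg_log hf hlc).continuousAt.comp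
      (continuousAt_quantile_of_strictMono hF hFc hy)).continuousWithinAt)
    (fun y hy => ?_)
    (fun y₁ hy₁ y₂ hy₂ hle => neg_le_neg <|
      hlc.monotoneOn_rightDeriv (by simp) (by simp) (hQ.monotoneOn hy₁ hy₂ hle))
  convert (hasDerivWithinAt_Ioi_of_convexOn_neg_log hf hlc _).comp_Ioi_of_strictMonoOn
    (hasDerivAt_quantile_of_strictMono hF hFc hy (hFd _) (hf _).ne') hQ (Ioo_mem_nhds hy.1 hy.2)
    using 1
  field_simp [(hf (quantile μ y)).ne']

end LogConcave

theorem logconcave_quantile_deriv_general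
    (f : ℝ → ℝ) (hfpos : ∀ x, 0 < f x)
    (hlc : ConvexOn ℝ Set.univ (fun x => -Real.log (f x)))
    (μ : Measure ℝ) (hμ : μ = volume.withDensity (fun x => ENNReal.ofReal (f x)))
    [IsProbabilityMeasure μ] :
    (∀ y ∈ Set.Ioo (0:ℝ) 1, HasDerivAt (quantile μ) (1 / f (quantile μ y)) y) ∧
    ConvexOn ℝ (Set.Ioo (0:ℝ) 1) (fun y => 1 / f (quantile μ y)) ∧
    (∀ y ∈ Set.Ioo (0:ℝ) 1, 0 < 1 / f (quantile μ y)) := by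
  have hFd : ∀ x, HasDerivAt (cdf μ) (f x) x := hasDerivAt_cdf_of_withDensity hμ
    (fun x => (hfpos x).le) (continuous_of_convexOn_neg_log hfpos hlc)
  have hF : StrictMono (cdf μ) := strictMono_of_hasDerivAt_pos hFd hfpos
  have hFc : Continuous (cdf μ) := continuous_iff_continuousAt.2 fun x => (hFd x).continuousAt
  refine ⟨fun y hy => ?_, ?_, fun y _ => one_div_pos.2 (hfpos _)⟩
  · simpa only [one_div] using hasDerivAt_quantile_of_strictMono hF hFc hy (hFd _) (hfpos _).ne'
  · simp only [one_div]
    exact (concaveOn_comp_quantile_of_convexOn_neg_log hfpos hlc hF hFc hFd).convexOn_inv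
      fun y _ => hfpos _

/-- for a log-concave positive density `f`, the quantile function `Q`
of `μ = f·dx` is differentiable on `(0,1)` with derivative `Q'(y) = 1/f(Q(y))`, which
is a convex positive function on `(0,1)`. -/
theorem logconcave_quantile_deriv
    (f : ℝ → ℝ) (hfpos : ∀ x, 0 < f x) (hfmeas : Measurable f)
    (hlc : ConvexOn ℝ Set.univ (fun x => -Real.log (f x)))
    (μ : Measure ℝ) (hμ : μ = volume.withDensity (fun x => ENNReal.ofReal (f x)))
    [IsProbabilityMeasure μ] :
    (∀ y ∈ Set.Ioo (0:ℝ) 1, HasDerivAt (quantile μ) (1 / f (quantile μ y)) y) ∧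
    ConvexOn ℝ (Set.Ioo (0:ℝ) 1) (fun y => 1 / f (quantile μ y)) ∧
    (∀ y ∈ Set.Ioo (0:ℝ) 1, 0 < 1 / f (quantile μ y)) :=
  logconcave_quantile_deriv_general f hfpos hlc μ hμ
end

section
/- Let μ̂ be an absolutely continuous measure on ℝ^q with covariance Σ̂ (symmetric positive definite) that is a Karcher mean of a measure Π supported on a location-scatter family generated by X̃ (mean zero, identity covariance): members m have mean b_m and covariance Σ_m. Then the mean of μ̂ equals ∫ b_m Π(dm) and Σ̂ satisfies the fixed-point equation Σ̂ = ∫ (Σ̂^{1/2} Σ_m Σ̂^{1/2})^{1/2} Π(dm) conjugated appropriately, i.e. ∫ Σ̂^{-1/2}(Σ̂^{1/2}Σ_mΣ̂^{1/2})^{1/2}Σ̂^{-1/2} Π(dm) = I. -/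
/-!
Integrating the Karcher equation over `Π` turns it into the affine identity
`x = A (x - b̂) + ∫ b dΠ` for `μ̂`-a.e. `x`, where `A` is the entrywise `Π`-integral of the linear
parts `R⁻¹ S R⁻¹`. Taking `μ̂`-expectations gives `b̂ = ∫ b dΠ`. Multiplying the centred identity
`x - b̂ = A (x - b̂)` by `(x - b̂)ᵀ` and integrating gives `A Σ̂ = Σ̂`, hence `A = I` since `Σ̂` is
invertible, and then `∫ S dΠ = R A R = R² = Σ̂`.
-/

open MeasureTheory Matrix

noncomputable def entrywiseIntegral {ι m n : Type*} [MeasurableSpace ι] (P : Measure ι)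
    (M : ι → Matrix m n ℝ) : Matrix m n ℝ :=
  Matrix.of fun k l => ∫ i, M i k l ∂P

section AffineFamily

variable {ι m n : Type*} [MeasurableSpace ι] {P : Measure ι} [Fintype m] [Fintype n]

lemma entrywiseIntegral_mul_mul {M : ι → Matrix m n ℝ}
    (hM : ∀ k l, Integrable (fun i => M i k l) P) (X : Matrix m m ℝ) (Y : Matrix n n ℝ) :
    entrywiseIntegral P (fun i => X * M i * Y) = X * entrywiseIntegral P M * Y := by
  ext k l
  simp only [entrywiseIntegral, of_apply, mul_apply, Finset.sum_mul]
  rw [integral_finsetSum _ fun j _ => integrable_finsetSum _ fun a _ =>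
    ((hM a j).const_mul _).mul_const _]
  refine Finset.sum_congr rfl fun j _ => ?_
  rw [integral_finsetSum _ fun a _ => ((hM a j).const_mul _).mul_const _]
  refine Finset.sum_congr rfl fun a _ => ?_
  rw [integral_mul_const, integral_const_mul]

variable [DecidableEq n]

lemma integrable_toEuclideanLin {M : ι → Matrix m n ℝ}
    (hM : ∀ k l, Integrable (fun i => M i k l) P) (v : EuclideanSpace ℝ n) :
    Integrable (fun i => toEuclideanLin (M i) v) P := by
  refine integrable_piLp_iff.2 fun k => ?_
  simp only [toLpLin_apply, mulVec, dotProduct]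
  exact integrable_finsetSum _ fun l _ => (hM k l).mul_const _

lemma integral_toEuclideanLin {M : ι → Matrix m n ℝ}
    (hM : ∀ k l, Integrable (fun i => M i k l) P) (v : EuclideanSpace ℝ n) :
    ∫ i, toEuclideanLin (M i) v ∂P = toEuclideanLin (entrywiseIntegral P M) v := by
  ext k
  rw [eval_integral_piLp (integrable_piLp_iff.1 (integrable_toEuclideanLin hM v))]
  simp only [toLpLin_apply, mulVec, dotProduct, entrywiseIntegral, of_apply]
  rw [integral_finsetSum _ fun l _ => (hM k l).mul_const _]
  exact Finset.sum_congr rfl fun l _ => integral_mul_const _ _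

end AffineFamily

lemma integral_eq_of_ae_eq_affine {E : Type*} [NormedAddCommGroup E] [NormedSpace ℝ E]
    [CompleteSpace E] [MeasurableSpace E] {μ : Measure E} [IsProbabilityMeasure μ]
    (hμ : Integrable id μ) (L : E →L[ℝ] E) {c : E} (h : ∀ᵐ x ∂μ, x = L (x - ∫ y, y ∂μ) + c) :
    ∫ x, x ∂μ = c := by
  have hcent : Integrable (fun x => x - ∫ y, y ∂μ) μ := hμ.sub (integrable_const _)
  calc ∫ x, x ∂μ = ∫ x, (L (x - ∫ y, y ∂μ) + c) ∂μ := integral_congr_ae h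
    _ = L (∫ x, (x - ∫ y, y ∂μ) ∂μ) + c := by
      rw [integral_add (L.integrable_comp hcent) (integrable_const c), L.integral_comp_comm hcent,
        integral_const, probReal_univ, one_smul]
    _ = c := by
      rw [integral_sub (f := fun x => x) hμ (integrable_const _), integral_const, probReal_univ,
        one_smul, sub_self, map_zero, zero_add]

section SecondMoments

variable {n : Type*} [Fintype n] {μ : Measure (EuclideanSpace ℝ n)}

lemma integrable_apply_mul_apply {α : Type*} [MeasurableSpace α] {ν : Measure α}
    {f : α → EuclideanSpace ℝ n} (hf : MemLp f 2 ν) (k l : n) :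
    Integrable (fun x => f x k * f x l) ν :=
  (hf.eval_piLp k).integrable_mul (hf.eval_piLp l)

lemma mul_eq_right_of_ae_fixed [DecidableEq n] [IsFiniteMeasure μ] (hμ : MemLp id 2 μ)
    {c : EuclideanSpace ℝ n} {A C : Matrix n n ℝ}
    (hC : ∀ k l, ∫ x, (x k - c k) * (x l - c l) ∂μ = C k l)
    (hfix : ∀ᵐ x ∂μ, x - c = toEuclideanLin A (x - c)) :
    A * C = C := by
  have hint : ∀ k l, Integrable (fun x => (x k - c k) * (x l - c l)) μ :=
    integrable_apply_mul_apply (f := fun x => x - c) (hμ.sub (memLp_const c))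
  ext k j
  calc (A * C) k j = ∑ l, A k l * ∫ x, (x l - c l) * (x j - c j) ∂μ := by
        simp only [mul_apply, hC]
    _ = ∫ x, (∑ l, A k l * (x l - c l)) * (x j - c j) ∂μ := by
        simp only [Finset.sum_mul, mul_assoc]
        rw [integral_finsetSum _ fun l _ => (hint l j).const_mul _]
        simp only [integral_const_mul]
    _ = ∫ x, (x k - c k) * (x j - c j) ∂μ := by
        refine integral_congr_ae ?_
        filter_upwards [hfix] with x hx
        have hk : x k - c k = ∑ l, A k l * (x l - c l) := by
          simpa [mulVec, dotProduct, mul_sub] using congrArg (fun v => v k) hx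
        rw [hk]
    _ = C k j := hC k j

end SecondMoments

theorem karcher_mean_location_scatter_general (q : ℕ)
    {ι : Type*} [MeasurableSpace ι] (P : Measure ι)
    (b : ι → EuclideanSpace ℝ (Fin q))
    (μhat : Measure (EuclideanSpace ℝ (Fin q))) [IsProbabilityMeasure μhat]
    (hmom : Integrable (fun x => ‖x‖ ^ 2) μhat)
    (Shat R : Matrix (Fin q) (Fin q) ℝ)
    (hShat : Shat.PosDef) (hR : R.PosDef) (hR2 : R * R = Shat)
    (S : ι → Matrix (Fin q) (Fin q) ℝ)
    (bhat : EuclideanSpace ℝ (Fin q)) (hbhat : bhat = ∫ x, x ∂μhat)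
    (hcovhat : ∀ k l, ∫ x, (x k - bhat k) * (x l - bhat l) ∂μhat = Shat k l)
    (hbint : Integrable b P)
    (hAint : ∀ k l, Integrable (fun i => (R⁻¹ * S i * R⁻¹) k l) P)
    (hKarcher : ∀ᵐ x ∂μhat,
      x = ∫ i, (Matrix.toEuclideanLin (R⁻¹ * S i * R⁻¹) (x - bhat) + b i) ∂P) :
    bhat = (∫ i, b i ∂P) ∧
    (∀ k l, (∫ i, (R⁻¹ * S i * R⁻¹) k l ∂P) = (1 : Matrix (Fin q) (Fin q) ℝ) k l) ∧
    (∀ k l, (∫ i, S i k l ∂P) = Shat k l) := by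
  set A := entrywiseIntegral P (fun i => R⁻¹ * S i * R⁻¹)
  have hX : MemLp id 2 μhat := (memLp_two_iff_integrable_sq_norm aestronglyMeasurable_id).2 hmom
  have haffine : ∀ᵐ x ∂μhat, x = toEuclideanCLM (𝕜 := ℝ) A (x - bhat) + ∫ i, b i ∂P := by
    filter_upwards [hKarcher] with x hx
    rwa [integral_add (integrable_toEuclideanLin hAint _) hbint,
      integral_toEuclideanLin hAint] at hx
  have hmean : bhat = ∫ i, b i ∂P := by
    subst hbhat
    exact integral_eq_of_ae_eq_affine (hX.integrable one_le_two) _ haffine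
  have hfix : ∀ᵐ x ∂μhat, x - bhat = toEuclideanLin A (x - bhat) := by
    filter_upwards [haffine] with x hx
    rw [← hmean] at hx
    exact sub_eq_of_eq_add hx
  have hA : A = 1 := hShat.isUnit.mul_eq_right.mp (mul_eq_right_of_ae_fixed hX hcovhat hfix)
  have hS : entrywiseIntegral P S = Shat := by
    have hRu : IsUnit R.det := (isUnit_iff_isUnit_det R).mp hR.isUnit
    calc entrywiseIntegral P S = entrywiseIntegral P (fun i => R * (R⁻¹ * S i * R⁻¹) * R) := by
          simp only [Matrix.mul_assoc, mul_nonsing_inv_cancel_left _ _ hRu,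
            nonsing_inv_mul_cancel_right _ _ hRu]
      _ = R * A * R := entrywiseIntegral_mul_mul hAint R R
      _ = Shat := by rw [hA, mul_one, hR2]
  exact ⟨hmean, fun k l => congrFun₂ hA k l, fun k l => congrFun₂ hS k l⟩

/-- a Karcher mean of a measure supported on a location-scatter family
has mean `∫ b_m dΠ` and covariance solving the fixed-point equation
`∫ Σ̂^{-1/2}(Σ̂^{1/2}Σ_mΣ̂^{1/2})^{1/2}Σ̂^{-1/2} dΠ = I` (equivalently
`Σ̂ = ∫ (Σ̂^{1/2}Σ_mΣ̂^{1/2})^{1/2} dΠ`). Here `R = Σ̂^{1/2}` and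
`S i = (Σ̂^{1/2}Σ_{m_i}Σ̂^{1/2})^{1/2}` are the unique symmetric positive-definite
square roots, so that `A i = R⁻¹ S i R⁻¹` is the linear part of the Brenier map. -/
theorem karcher_mean_location_scatter (q : ℕ)
    {ι : Type*} [MeasurableSpace ι] (P : Measure ι) [IsProbabilityMeasure P]
    (b : ι → EuclideanSpace ℝ (Fin q)) (Sm : ι → Matrix (Fin q) (Fin q) ℝ)
    (hSm : ∀ i, (Sm i).PosDef)
    (μhat : Measure (EuclideanSpace ℝ (Fin q))) [IsProbabilityMeasure μhat]
    (hac : μhat ≪ volume)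
    (hmom : Integrable (fun x => ‖x‖ ^ 2) μhat)
    (Shat R : Matrix (Fin q) (Fin q) ℝ)
    (hShat : Shat.PosDef) (hR : R.PosDef) (hR2 : R * R = Shat)
    (S : ι → Matrix (Fin q) (Fin q) ℝ) (hSpd : ∀ i, (S i).PosDef)
    (hS2 : ∀ i, S i * S i = R * Sm i * R)
    (bhat : EuclideanSpace ℝ (Fin q)) (hbhat : bhat = ∫ x, x ∂μhat)
    (hcovhat : ∀ k l, ∫ x, (x k - bhat k) * (x l - bhat l) ∂μhat = Shat k l)
    (hbint : Integrable b P)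
    (hAint : ∀ k l, Integrable (fun i => (R⁻¹ * S i * R⁻¹) k l) P)
    (hSint : ∀ k l, Integrable (fun i => S i k l) P)
    (hKarcher : ∀ᵐ x ∂μhat,
      x = ∫ i, (Matrix.toEuclideanLin (R⁻¹ * S i * R⁻¹) (x - bhat) + b i) ∂P) :
    bhat = (∫ i, b i ∂P) ∧
    (∀ k l, (∫ i, (R⁻¹ * S i * R⁻¹) k l ∂P) = (1 : Matrix (Fin q) (Fin q) ℝ) k l) ∧
    (∀ k l, (∫ i, S i k l ∂P) = Shat k l) :=
  karcher_mean_location_scatter_general q P b μhat hmom Shat R hShat hR hR2 S bhat hbhat hcovhat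
    hbint hAint hKarcher
end
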